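/- arXiv:1611.08861 — 2 statements merged into one kernel-verified Lean document; each statement's English description precedes it below -/
import Mathlib

section
/- There exist universal constants ρ > 0 and κ > 0 with the following property. For every n ∈ ℕ, every k ∈ {3,…,n}, every connected k-regular graph G = ([n], E_G), every D ≥ 1, and every finite-dimensional real normed space (X,‖·‖) into which the metric space ([n], d_G) embeds with average distortion D, one has dim(X) ≥ κ·n^{ρ(1−λ₂(G))/(D·log k)}. -/
/-!
The lazy random walk `B = (1 + A) / 2` of the graph is positive semidefinite and contracts
mean-zero vectors by `(1 + λ₂) / 2`. Written in an Auerbach basis of `X`, this contraction passes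
to `X`-valued maps at the cost of a factor `dim X`, so for `m ≈ log (dim X) / (1 - λ₂)` the
smoothing `g ↦ B^m g` is a strict contraction of centred maps. This gives a Poincaré inequality
`∑ ‖g i‖² ≤ 4 ∑ (B^m)ᵢⱼ ‖g i - g j‖²`, and as `B^m` only connects vertices at distance `≤ m`,
a `D`-Lipschitz map has average distance `O(D m)`. On the other hand, balls of radius `r` in a
`k`-regular graph have at most `(k + 1)^r` vertices, so the average graph distance is
`≳ log n / log k`. Average distortion `D` thus forces `log n / log k ≲ D log (dim X) / (1 - λ₂)`.
-/

open Finset Matrix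

namespace Matrix

variable {ι : Type*} [Fintype ι]

theorem dotProduct_mulVec_eq_sum_sum {R : Type*} [CommSemiring R] (A : Matrix ι ι R)
    (x y : ι → R) :
    x ⬝ᵥ A *ᵥ y = ∑ i, ∑ j, A i j * x i * y j := by
  simp only [dotProduct, mulVec, mul_sum]
  exact sum_congr rfl fun i _ => sum_congr rfl fun j _ => by ring

theorem sum_sq_eq_dotProduct_self {R : Type*} [Semiring R] (t : ι → R) : ∑ i, t i ^ 2 = t ⬝ᵥ t := by
  simp [dotProduct, sq]

theorem dotProduct_self_pos_of_ne_zero {t : ι → ℝ} (ht : t ≠ 0) : 0 < t ⬝ᵥ t := by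
  simpa using dotProduct_star_self_pos_iff.2 ht

theorem PosSemidef.sq_dotProduct_mulVec_le {M : Matrix ι ι ℝ} (hM : M.PosSemidef)
    (x y : ι → ℝ) :
    (x ⬝ᵥ M *ᵥ y) ^ 2 ≤ (x ⬝ᵥ M *ᵥ x) * (y ⬝ᵥ M *ᵥ y) := by
  let := M.toSeminormedAddCommGroup hM
  let := M.toInnerProductSpace hM
  have inner_eq (u v : ι → ℝ) : @inner ℝ _ _ u v = u ⬝ᵥ M *ᵥ v := by
    show (M *ᵥ v) ⬝ᵥ star u = _
    rw [star_trivial, dotProduct_comm]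
  simpa only [sq, inner_eq] using real_inner_mul_inner_self_le x y

/-- Cauchy–Schwarz for the form of `M` turns `‖Mt‖² = ⟨t, M(Mt)⟩` into
`‖Mt‖⁴ ≤ ⟨t, Mt⟩ ⟨Mt, M(Mt)⟩ ≤ μ² ‖t‖² ‖Mt‖²`. -/
theorem PosSemidef.mulVec_dotProduct_mulVec_le {M : Matrix ι ι ℝ} (hM : M.PosSemidef)
    {W : Set (ι → ℝ)} (hW : Set.MapsTo (M *ᵥ ·) W W) {μ : ℝ}
    (hμ : ∀ t ∈ W, t ⬝ᵥ M *ᵥ t ≤ μ * (t ⬝ᵥ t)) {t : ι → ℝ} (ht : t ∈ W) :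
    (M *ᵥ t) ⬝ᵥ (M *ᵥ t) ≤ μ ^ 2 * (t ⬝ᵥ t) := by
  set u := M *ᵥ t
  have hq (s : ι → ℝ) : 0 ≤ s ⬝ᵥ M *ᵥ s := by simpa using hM.dotProduct_mulVec_nonneg s
  have huu : u ⬝ᵥ u = t ⬝ᵥ M *ᵥ u := by
    rw [dotProduct_mulVec, ← mulVec_transpose, (isHermitian_iff_isSymm.mp hM.isHermitian).eq,
      dotProduct_comm]
  have hcs : (u ⬝ᵥ u) ^ 2 ≤ μ * (t ⬝ᵥ t) * (μ * (u ⬝ᵥ u)) :=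
    calc (u ⬝ᵥ u) ^ 2 = (t ⬝ᵥ M *ᵥ u) ^ 2 := by rw [huu]
      _ ≤ (t ⬝ᵥ M *ᵥ t) * (u ⬝ᵥ M *ᵥ u) := hM.sq_dotProduct_mulVec_le t u
      _ ≤ _ := mul_le_mul (hμ t ht) (hμ u (hW ht)) (hq u) ((hq t).trans (hμ t ht))
  have htt : 0 ≤ t ⬝ᵥ t := by simpa using dotProduct_star_self_nonneg t
  rcases (show 0 ≤ u ⬝ᵥ u by simpa using dotProduct_star_self_nonneg u).eq_or_lt with h0 | hpos
  · rw [← h0]; positivity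
  · nlinarith

theorem PosSemidef.pow_mulVec_dotProduct_pow_mulVec_le [DecidableEq ι] {M : Matrix ι ι ℝ}
    (hM : M.PosSemidef) {W : Set (ι → ℝ)} (hW : Set.MapsTo (M *ᵥ ·) W W) {μ : ℝ}
    (hμ : ∀ t ∈ W, t ⬝ᵥ M *ᵥ t ≤ μ * (t ⬝ᵥ t)) (m : ℕ) {t : ι → ℝ} (ht : t ∈ W) :
    (M ^ m *ᵥ t) ⬝ᵥ (M ^ m *ᵥ t) ≤ (μ ^ 2) ^ m * (t ⬝ᵥ t) := by
  induction m generalizing t with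
  | zero => simp
  | succ m ih =>
    rw [pow_succ, ← mulVec_mulVec, pow_succ, mul_assoc]
    exact (ih (hW ht)).trans <|
      mul_le_mul_of_nonneg_left (hM.mulVec_dotProduct_mulVec_le hW hμ ht) (by positivity)

theorem neg_dotProduct_self_le_dotProduct_mulVec [DecidableEq ι] {A : Matrix ι ι ℝ}
    (hA : A ∈ doublyStochastic ℝ ι) (x : ι → ℝ) : -(x ⬝ᵥ x) ≤ x ⬝ᵥ A *ᵥ x := by
  have hrow : ∑ i, ∑ j, A i j * x i ^ 2 = x ⬝ᵥ x := by
    simp [← sum_mul, sum_row_of_mem_doublyStochastic hA, dotProduct, sq]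
  have hcol : ∑ i, ∑ j, A i j * x j ^ 2 = x ⬝ᵥ x := by
    rw [sum_comm]
    simp [← sum_mul, sum_col_of_mem_doublyStochastic hA, dotProduct, sq]
  have hexpand : ∑ i, ∑ j, A i j * (x i + x j) ^ 2 =
      ∑ i, ∑ j, A i j * x i ^ 2 + 2 * ∑ i, ∑ j, A i j * x i * x j +
        ∑ i, ∑ j, A i j * x j ^ 2 := by
    simp only [mul_sum, ← sum_add_distrib]
    exact sum_congr rfl fun i _ => sum_congr rfl fun j _ => by ring
  have hnonneg : 0 ≤ ∑ i, ∑ j, A i j * (x i + x j) ^ 2 :=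
    sum_nonneg fun i _ => sum_nonneg fun j _ =>
      mul_nonneg (nonneg_of_mem_doublyStochastic hA) (sq_nonneg _)
  rw [dotProduct_mulVec_eq_sum_sum]
  linarith

/-- For symmetric stochastic `A`, the supremum of this set is `λ₂(A)`. -/
def meanZeroRayleighQuotients (A : Matrix ι ι ℝ) : Set ℝ :=
  {r | ∃ t : ι → ℝ, t ≠ 0 ∧ ∑ i, t i = 0 ∧
    r = (∑ i, ∑ j, A i j * t i * t j) / ∑ i, t i ^ 2}

theorem dotProduct_mulVec_le_of_isGreatest {A : Matrix ι ι ℝ} {lam : ℝ}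
    (hlam : IsGreatest A.meanZeroRayleighQuotients lam) {t : ι → ℝ} (ht : ∑ i, t i = 0) :
    t ⬝ᵥ A *ᵥ t ≤ lam * (t ⬝ᵥ t) := by
  rcases eq_or_ne t 0 with rfl | ht₀
  · simp
  have h := hlam.2 ⟨t, ht₀, ht, rfl⟩
  rwa [← dotProduct_mulVec_eq_sum_sum, sum_sq_eq_dotProduct_self,
    div_le_iff₀ (dotProduct_self_pos_of_ne_zero ht₀)] at h

theorem neg_one_le_of_isGreatest [DecidableEq ι] {A : Matrix ι ι ℝ}
    (hA : A ∈ doublyStochastic ℝ ι) {lam : ℝ} (hlam : IsGreatest A.meanZeroRayleighQuotients lam) :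
    -1 ≤ lam := by
  obtain ⟨t, ht₀, -, rfl⟩ := hlam.1
  rw [← dotProduct_mulVec_eq_sum_sum, sum_sq_eq_dotProduct_self,
    le_div_iff₀ (dotProduct_self_pos_of_ne_zero ht₀)]
  linarith [neg_dotProduct_self_le_dotProduct_mulVec hA t]

end Matrix

namespace Matrix

variable {ι : Type*} [DecidableEq ι]

/-- The lazy walk of `A`: its spectrum lies in `[0, 1]` when that of `A` lies in `[-1, 1]`. -/
noncomputable def lazyWalk (A : Matrix ι ι ℝ) : Matrix ι ι ℝ := (2 : ℝ)⁻¹ • (1 + A)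

theorem lazyWalk_apply_ne_zero {A : Matrix ι ι ℝ} {i j : ι} (h : lazyWalk A i j ≠ 0) :
    i = j ∨ A i j ≠ 0 := by
  by_contra! hij
  simp [lazyWalk, one_apply_ne hij.1, hij.2] at h

variable [Fintype ι]

theorem lazyWalk_mem_doublyStochastic {A : Matrix ι ι ℝ} (hA : A ∈ doublyStochastic ℝ ι) :
    lazyWalk A ∈ doublyStochastic ℝ ι := by
  rw [lazyWalk, smul_add]
  exact convex_doublyStochastic (one_mem _) hA (by norm_num) (by norm_num) (by norm_num)

theorem dotProduct_lazyWalk_mulVec (A : Matrix ι ι ℝ) (x : ι → ℝ) :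
    x ⬝ᵥ lazyWalk A *ᵥ x = (x ⬝ᵥ x + x ⬝ᵥ A *ᵥ x) / 2 := by
  simp only [lazyWalk, smul_mulVec, add_mulVec, one_mulVec, dotProduct_smul, dotProduct_add,
    smul_eq_mul]
  ring

theorem posSemidef_lazyWalk {A : Matrix ι ι ℝ} (hA : A ∈ doublyStochastic ℝ ι) (hAs : A.IsSymm) :
    (lazyWalk A).PosSemidef := by
  refine .of_dotProduct_mulVec_nonneg ?_ fun x => ?_
  · rw [isHermitian_iff_isSymm]
    exact (isSymm_one.add hAs).smul _
  · rw [star_trivial, dotProduct_lazyWalk_mulVec]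
    linarith [neg_dotProduct_self_le_dotProduct_mulVec hA x]

theorem lazyWalk_pow_mulVec_dotProduct_le {A : Matrix ι ι ℝ} (hA : A ∈ doublyStochastic ℝ ι)
    (hAs : A.IsSymm) {lam : ℝ} (hlam : ∀ t : ι → ℝ, ∑ i, t i = 0 → t ⬝ᵥ A *ᵥ t ≤ lam * (t ⬝ᵥ t))
    (m : ℕ) {t : ι → ℝ} (ht : ∑ i, t i = 0) :
    (lazyWalk A ^ m *ᵥ t) ⬝ᵥ (lazyWalk A ^ m *ᵥ t) ≤ (((1 + lam) / 2) ^ 2) ^ m * (t ⬝ᵥ t) :=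
  (posSemidef_lazyWalk hA hAs).pow_mulVec_dotProduct_pow_mulVec_le (W := {t | ∑ i, t i = 0})
    (fun t ht => (sum_mulVec_of_mem_doublyStochastic (lazyWalk_mem_doublyStochastic hA)).trans ht)
    (fun t ht => by rw [dotProduct_lazyWalk_mulVec]; linarith [hlam t ht]) m ht

end Matrix

namespace SimpleGraph

variable {V : Type*} {G : SimpleGraph V}

theorem inv_smul_adjMatrix_apply [DecidableRel G.Adj] (k : ℕ) (i j : V) :
    ((k : ℝ)⁻¹ • G.adjMatrix ℝ) i j = if G.Adj i j then (1 : ℝ) / k else 0 := by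
  simp [adjMatrix_apply]

variable [Fintype V] [DecidableEq V]

theorem Connected.dist_le_of_pow_apply_ne_zero {R : Type*} [Semiring R] (hG : G.Connected)
    {M : Matrix V V R} (hM : ∀ i j, M i j ≠ 0 → G.dist i j ≤ 1) (m : ℕ) {i j : V}
    (h : (M ^ m) i j ≠ 0) : G.dist i j ≤ m := by
  induction m generalizing j with
  | zero =>
    obtain rfl : i = j := by by_contra hij; simp [one_apply_ne hij] at h
    simp
  | succ m ih =>
    rw [pow_succ, mul_apply] at h
    obtain ⟨l, -, hl⟩ := exists_ne_zero_of_sum_ne_zero h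
    calc G.dist i j ≤ G.dist i l + G.dist l j := hG.dist_triangle
      _ ≤ m + 1 := add_le_add (ih (left_ne_zero_of_mul hl)) (hM l j (right_ne_zero_of_mul hl))

variable [DecidableRel G.Adj]

theorem IsRegularOfDegree.inv_smul_adjMatrix_mem_doublyStochastic {k : ℕ}
    (hG : G.IsRegularOfDegree k) (hk : k ≠ 0) :
    (k : ℝ)⁻¹ • G.adjMatrix ℝ ∈ doublyStochastic ℝ V := by
  have hrow : G.adjMatrix ℝ *ᵥ 1 = k := funext fun v => by
    simpa using G.adjMatrix_mulVec_const_apply_of_regular (a := (1 : ℝ)) hG (v := v)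
  refine ⟨fun i j => ?_, ?_, ?_⟩
  · rw [inv_smul_adjMatrix_apply]; positivity
  · rw [smul_mulVec, hrow]
    ext; simp [hk]
  · rw [← mulVec_transpose, transpose_smul, transpose_adjMatrix, smul_mulVec, hrow]
    ext; simp [hk]

theorem filter_dist_le_succ_subset (i : V) (r : ℕ) :
    ({j | G.dist i j ≤ r + 1} : Finset V) ⊆
      ({j | G.dist i j ≤ r} : Finset V).biUnion fun l => insert l (G.neighborFinset l) := by
  intro j hj
  rw [mem_filter] at hj
  simp only [mem_biUnion, mem_filter, mem_univ, true_and, mem_insert, mem_neighborFinset]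
  rcases hj.2.lt_or_eq with hlt | heq
  · exact ⟨j, Nat.lt_succ_iff.mp hlt, Or.inl rfl⟩
  have hji : G.dist j i = r + 1 := by rw [dist_comm]; exact heq
  obtain ⟨p, hp⟩ :=
    (Reachable.of_dist_ne_zero (by omega : G.dist j i ≠ 0)).exists_walk_length_eq_dist
  rw [hji] at hp
  cases p with
  | nil => simp at hp
  | @cons _ l _ hjl q =>
    refine ⟨l, ?_, Or.inr hjl.symm⟩
    have := dist_le q
    rw [Walk.length_cons] at hp
    rw [dist_comm]
    omega

theorem card_filter_dist_le_le_pow (hG : G.Connected) {k : ℕ} (hdeg : ∀ v, G.degree v ≤ k)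
    (i : V) (r : ℕ) : #{j | G.dist i j ≤ r} ≤ (k + 1) ^ r := by
  induction r with
  | zero => simp [hG.dist_eq_zero_iff, filter_eq]
  | succ r ih =>
    calc #{j | G.dist i j ≤ r + 1}
        ≤ ∑ l ∈ {j | G.dist i j ≤ r}, #(insert l (G.neighborFinset l)) :=
          (card_le_card (filter_dist_le_succ_subset i r)).trans card_biUnion_le
      _ ≤ ∑ _l ∈ ({j | G.dist i j ≤ r} : Finset V), (k + 1) :=
          sum_le_sum fun l _ => (card_insert_le _ _).trans (by simpa using hdeg l)
      _ ≤ (k + 1) ^ (r + 1) := by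
          rw [sum_const, smul_eq_mul, pow_succ]; gcongr

/-- At least half of the vertices lie outside the ball of radius `r` around `i`. -/
theorem card_mul_succ_le_two_mul_sum_dist (hG : G.Connected) {k : ℕ}
    (hdeg : ∀ v, G.degree v ≤ k) {r : ℕ} (hr : 2 * (k + 1) ^ r ≤ Fintype.card V) (i : V) :
    Fintype.card V * (r + 1) ≤ 2 * ∑ j, G.dist i j := by
  have hsplit := card_filter_add_card_filter_not (s := univ) (fun j => G.dist i j ≤ r)
  rw [card_univ] at hsplit
  have hball := card_filter_dist_le_le_pow hG hdeg i r
  calc Fintype.card V * (r + 1) ≤ 2 * (#{j | ¬G.dist i j ≤ r} * (r + 1)) := by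
        rw [← mul_assoc]; gcongr; omega
    _ = 2 * ∑ j ∈ {j | ¬G.dist i j ≤ r}, (r + 1) := by rw [sum_const, smul_eq_mul]
    _ ≤ 2 * ∑ j, G.dist i j := by
        gcongr
        exact (sum_le_sum fun j hj => by rw [mem_filter, not_le] at hj; omega).trans
          (sum_le_sum_of_subset (filter_subset _ _))

theorem card_sq_mul_succ_le_two_mul_sum_sum_dist (hG : G.Connected) {k : ℕ}
    (hdeg : ∀ v, G.degree v ≤ k) {r : ℕ} (hr : 2 * (k + 1) ^ r ≤ Fintype.card V) :
    Fintype.card V ^ 2 * (r + 1) ≤ 2 * ∑ i, ∑ j, G.dist i j := by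
  calc Fintype.card V ^ 2 * (r + 1) = ∑ _i : V, Fintype.card V * (r + 1) := by
        simp [sq, mul_assoc]
    _ ≤ ∑ i, 2 * ∑ j, G.dist i j :=
        sum_le_sum fun i _ => card_mul_succ_le_two_mul_sum_dist hG hdeg hr i
    _ = 2 * ∑ i, ∑ j, G.dist i j := by rw [mul_sum]

end SimpleGraph

namespace Module.Basis

variable {ι X : Type*} [Fintype ι] [NormedAddCommGroup X] [NormedSpace ℝ X]

theorem sq_norm_le_card_mul_sum_sq_repr (b : Basis ι ℝ X) (hb : ∀ i, ‖b i‖ ≤ 1) (x : X) :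
    ‖x‖ ^ 2 ≤ Fintype.card ι * ∑ i, b.repr x i ^ 2 := by
  have hx : ‖x‖ ≤ ∑ i, |b.repr x i| := by
    conv_lhs => rw [← b.sum_repr x]
    refine (norm_sum_le _ _).trans (sum_le_sum fun i _ => ?_)
    rw [_root_.norm_smul, Real.norm_eq_abs]
    exact mul_le_of_le_one_right (abs_nonneg _) (hb i)
  calc ‖x‖ ^ 2 ≤ (∑ i, |b.repr x i|) ^ 2 := by gcongr
    _ ≤ Fintype.card ι * ∑ i, |b.repr x i| ^ 2 := sq_sum_le_card_mul_sum_sq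
    _ = Fintype.card ι * ∑ i, b.repr x i ^ 2 := by simp only [sq_abs]

theorem sum_sq_repr_le_card_mul_sq_norm (b : Basis ι ℝ X) (hb : ∀ x i, |b.repr x i| ≤ ‖x‖)
    (x : X) : ∑ i, b.repr x i ^ 2 ≤ Fintype.card ι * ‖x‖ ^ 2 := by
  calc ∑ i, b.repr x i ^ 2 ≤ ∑ _i : ι, ‖x‖ ^ 2 :=
        sum_le_sum fun i _ => sq_le_sq' (abs_le.1 (hb x i)).1 (abs_le.1 (hb x i)).2
    _ = Fintype.card ι * ‖x‖ ^ 2 := by simp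

variable [FiniteDimensional ℝ X]

theorem continuous_det [DecidableEq ι] (b : Basis ι ℝ X) :
    Continuous fun v : ι → X => b.det v := by
  simp_rw [det_apply]
  refine Continuous.matrix_det (continuous_matrix fun i j => ?_)
  exact (b.coord i).continuous_of_finiteDimensional.comp (continuous_apply j)

variable (X) in
/-- **Auerbach's lemma**. The basis is a family of unit vectors of maximal volume; Cramer's rule
bounds its coordinate functionals. -/
theorem exists_norm_eq_one_abs_repr_le :
    ∃ u : Basis (Fin (Module.finrank ℝ X)) ℝ X, (∀ i, ‖u i‖ = 1) ∧ ∀ x i, |u.repr x i| ≤ ‖x‖ := by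
  let b := Module.finBasis ℝ X
  let K : Set (Fin (Module.finrank ℝ X) → X) := Set.univ.pi fun _ => Metric.sphere 0 1
  have hw (i) : IsUnit ‖b i‖⁻¹ := (inv_pos.2 (norm_pos_iff.2 (b.ne_zero i))).ne'.isUnit
  have hv₀ : ⇑(b.isUnitSMul hw) ∈ K := fun i _ => by
    simp [isUnitSMul_apply, _root_.norm_smul, b.ne_zero i]
  obtain ⟨u, huK, hmax⟩ := (isCompact_univ_pi fun _ => isCompact_sphere (0 : X) 1).exists_isMaxOn
    ⟨_, hv₀⟩ (continuous_det b).abs.continuousOn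
  have hu : IsUnit (b.det u) := isUnit_iff_ne_zero.2 fun h =>
    (b.isUnit_det (b.isUnitSMul hw)).ne_zero (abs_nonpos_iff.1 (by simpa [h] using hmax hv₀))
  obtain ⟨hli, hsp⟩ := b.is_basis_iff_det.2 hu
  refine ⟨Basis.mk hli hsp.ge, fun i => by simpa using huK i trivial, fun x i => ?_⟩
  have hsphere (y : X) (hy : y ∈ Metric.sphere (0 : X) 1) :
      ‖(Basis.mk hli hsp.ge).coord i y‖ ≤ 1 := by
    have hdet : b.det u * (Basis.mk hli hsp.ge).coord i y = b.det (Function.update u i y) :=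
      congrArg (· y) (b.det_smul_mk_coord_eq_det_update hli hsp.ge i)
    have hle : |b.det (Function.update u i y)| ≤ |b.det u| :=
      hmax fun j _ => by
        rcases eq_or_ne j i with rfl | hj
        · simpa using hy
        · simpa [hj] using huK j trivial
    rw [← hdet, abs_mul] at hle
    exact le_of_mul_le_mul_left (by simpa using hle) (abs_pos.2 hu.ne_zero)
  simpa using (Basis.mk hli hsp.ge).coord i |>.bound_of_sphere_bound one_pos 1 hsphere x

end Module.Basis

section Poincare

variable {ι X : Type*} [Fintype ι] [NormedAddCommGroup X]

theorem sum_sum_norm_sub_le_two_mul_card (f : ι → X) (x₀ : X) :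
    ∑ i, ∑ j, ‖f i - f j‖ ≤ 2 * Fintype.card ι * ∑ i, ‖f i - x₀‖ := by
  calc ∑ i, ∑ j, ‖f i - f j‖ ≤ ∑ i, ∑ j, (‖f i - x₀‖ + ‖f j - x₀‖) := by
        gcongr with i _ j _
        exact norm_sub_le_norm_sub_add_norm_sub _ _ _ |>.trans_eq (by rw [norm_sub_rev x₀])
    _ = 2 * Fintype.card ι * ∑ i, ‖f i - x₀‖ := by
        simp only [sum_add_distrib, sum_const, card_univ, nsmul_eq_mul, ← mul_sum]
        ring

variable [NormedSpace ℝ X]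

theorem sum_norm_sub_sum_smul_sq_le [DecidableEq ι] {M : Matrix ι ι ℝ}
    (hM : M ∈ rowStochastic ℝ ι) (g : ι → X) :
    ∑ i, ‖g i - ∑ j, M i j • g j‖ ^ 2 ≤ ∑ i, ∑ j, M i j * ‖g i - g j‖ ^ 2 := by
  refine sum_le_sum fun i _ => ?_
  have hM0 (j : ι) : 0 ≤ M i j := nonneg_of_mem_rowStochastic hM
  have hrep : g i - ∑ j, M i j • g j = ∑ j, M i j • (g i - g j) := by
    simp [smul_sub, sum_sub_distrib, ← sum_smul, sum_row_of_mem_rowStochastic hM]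
  calc ‖g i - ∑ j, M i j • g j‖ ^ 2 ≤ (∑ j, M i j * ‖g i - g j‖) ^ 2 := by
        rw [hrep]
        gcongr
        refine (norm_sum_le _ _).trans_eq (sum_congr rfl fun j _ => ?_)
        rw [norm_smul, Real.norm_of_nonneg (hM0 j)]
    _ ≤ ∑ j, M i j * ‖g i - g j‖ ^ 2 := by
        simpa using (convexOn_pow 2).map_sum_le (fun j _ => hM0 j)
          (sum_row_of_mem_rowStochastic hM i) (fun j _ => norm_nonneg (g i - g j))

/-- The scalar bound is applied to each coordinate of an Auerbach basis of `X`; the two changes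
of norm cost a factor `dim X` each. -/
theorem sum_norm_sum_smul_sq_le [FiniteDimensional ℝ X] {M : Matrix ι ι ℝ} {C : ℝ} (hC : 0 ≤ C)
    (hMC : ∀ t : ι → ℝ, ∑ i, t i = 0 → (M *ᵥ t) ⬝ᵥ (M *ᵥ t) ≤ C * (t ⬝ᵥ t))
    {g : ι → X} (hg : ∑ i, g i = 0) :
    ∑ i, ‖∑ j, M i j • g j‖ ^ 2 ≤ Module.finrank ℝ X ^ 2 * C * ∑ i, ‖g i‖ ^ 2 := by
  obtain ⟨u, hu₁, hu₂⟩ := Module.Basis.exists_norm_eq_one_abs_repr_le X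
  set d : ℝ := (Module.finrank ℝ X : ℝ)
  let t (e) : ι → ℝ := fun i => u.repr (g i) e
  have ht (e) : ∑ i, t e i = 0 := by
    simp [t, ← Finsupp.finsetSum_apply, ← map_sum, hg]
  have hMt (e i) : u.repr (∑ j, M i j • g j) e = (M *ᵥ t e) i := by
    simp [t, mulVec, dotProduct]
  calc ∑ i, ‖∑ j, M i j • g j‖ ^ 2 ≤ ∑ i, d * ∑ e, u.repr (∑ j, M i j • g j) e ^ 2 :=
        sum_le_sum fun i _ => by
          simpa only [Fintype.card_fin] using
            u.sq_norm_le_card_mul_sum_sq_repr (fun e => (hu₁ e).le) (∑ j, M i j • g j)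
    _ = d * ∑ e, (M *ᵥ t e) ⬝ᵥ (M *ᵥ t e) := by
        simp only [← mul_sum, hMt, dotProduct, ← sq]
        rw [sum_comm]
    _ ≤ d * ∑ e, C * (t e ⬝ᵥ t e) := by gcongr with e; exact hMC _ (ht e)
    _ = d * C * ∑ i, ∑ e, u.repr (g i) e ^ 2 := by
        simp only [← mul_sum, dotProduct, t, ← sq, mul_assoc]
        rw [sum_comm]
    _ ≤ d * C * ∑ i, d * ‖g i‖ ^ 2 := by
        gcongr with i
        simpa only [Fintype.card_fin] using u.sum_sq_repr_le_card_mul_sq_norm hu₂ (g i)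
    _ = d ^ 2 * C * ∑ i, ‖g i‖ ^ 2 := by rw [← mul_sum]; ring

theorem sum_norm_sq_le_four_mul_of_contraction [DecidableEq ι] [FiniteDimensional ℝ X]
    {M : Matrix ι ι ℝ} (hM : M ∈ rowStochastic ℝ ι) {C : ℝ} (hC₀ : 0 ≤ C)
    (hC : Module.finrank ℝ X ^ 2 * C ≤ 1 / 4)
    (hMC : ∀ t : ι → ℝ, ∑ i, t i = 0 → (M *ᵥ t) ⬝ᵥ (M *ᵥ t) ≤ C * (t ⬝ᵥ t))
    {g : ι → X} (hg : ∑ i, g i = 0) :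
    ∑ i, ‖g i‖ ^ 2 ≤ 4 * ∑ i, ∑ j, M i j * ‖g i - g j‖ ^ 2 := by
  have hsplit : ∑ i, ‖g i‖ ^ 2 ≤
      2 * ∑ i, ‖g i - ∑ j, M i j • g j‖ ^ 2 + 2 * ∑ i, ‖∑ j, M i j • g j‖ ^ 2 := by
    simp only [mul_sum, ← sum_add_distrib, ← mul_add]
    refine sum_le_sum fun i _ => (pow_le_pow_left₀ (norm_nonneg _) ?_ 2).trans add_sq_le
    simpa using norm_add_le (g i - ∑ j, M i j • g j) (∑ j, M i j • g j)
  have hS : 0 ≤ ∑ i, ‖g i‖ ^ 2 := by positivity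
  have hsmooth := sum_norm_sub_sum_smul_sq_le hM g
  have hcontract := sum_norm_sum_smul_sq_le hC₀ hMC hg
  nlinarith

theorem sum_sum_norm_sub_le_of_contraction [DecidableEq ι] [FiniteDimensional ℝ X]
    {M : Matrix ι ι ℝ} (hM : M ∈ rowStochastic ℝ ι) {C : ℝ} (hC₀ : 0 ≤ C)
    (hC : Module.finrank ℝ X ^ 2 * C ≤ 1 / 4)
    (hMC : ∀ t : ι → ℝ, ∑ i, t i = 0 → (M *ᵥ t) ⬝ᵥ (M *ᵥ t) ≤ C * (t ⬝ᵥ t))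
    {f : ι → X} {L : ℝ} (hL : 0 ≤ L) (hfL : ∀ i j, M i j ≠ 0 → ‖f i - f j‖ ≤ L) :
    ∑ i, ∑ j, ‖f i - f j‖ ≤ 4 * Fintype.card ι ^ 2 * L := by
  rcases isEmpty_or_nonempty ι with hι | hι
  · simp
  set n : ℝ := (Fintype.card ι : ℝ)
  have hn : 0 < n := by simp [n, Fintype.card_pos]
  set x₀ := n⁻¹ • ∑ i, f i
  set g := fun i => f i - x₀
  have hg : ∑ i, g i = 0 := by
    simp only [g, x₀, sum_sub_distrib, sum_const, card_univ, ← Nat.cast_smul_eq_nsmul ℝ, smul_smul]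
    rw [mul_inv_cancel₀ hn.ne', one_smul, sub_self]
  have hgf (i j) : g i - g j = f i - f j := sub_sub_sub_cancel_right _ _ _
  have hσ : ∑ i, ∑ j, M i j * ‖g i - g j‖ ^ 2 ≤ n * L ^ 2 :=
    calc ∑ i, ∑ j, M i j * ‖g i - g j‖ ^ 2 ≤ ∑ i, ∑ j, M i j * L ^ 2 := by
          refine sum_le_sum fun i _ => sum_le_sum fun j _ => ?_
          rcases eq_or_ne (M i j) 0 with h | h
          · simp [h]
          · refine mul_le_mul_of_nonneg_left ?_ (nonneg_of_mem_rowStochastic hM)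
            rw [hgf]
            gcongr
            exact hfL i j h
      _ = n * L ^ 2 := by simp [← sum_mul, sum_row_of_mem_rowStochastic hM, n]
  have hS : (∑ i, ‖g i‖) ^ 2 ≤ (2 * n * L) ^ 2 :=
    calc (∑ i, ‖g i‖) ^ 2 ≤ n * ∑ i, ‖g i‖ ^ 2 :=
          (sq_sum_le_card_mul_sum_sq (s := univ) (f := fun i => ‖g i‖)).trans_eq (by simp [n])
      _ ≤ n * (4 * (n * L ^ 2)) := by
          gcongr
          exact (sum_norm_sq_le_four_mul_of_contraction hM hC₀ hC hMC hg).trans (by linarith)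
      _ = (2 * n * L) ^ 2 := by ring
  calc ∑ i, ∑ j, ‖f i - f j‖ ≤ 2 * n * ∑ i, ‖g i‖ := sum_sum_norm_sub_le_two_mul_card f x₀
    _ ≤ 2 * n * (2 * n * L) := by
        gcongr; exact (pow_le_pow_iff_left₀ (by positivity) (by positivity) two_ne_zero).1 hS
    _ = 4 * n ^ 2 * L := by ring

end Poincare

theorem SimpleGraph.sum_sum_norm_sub_le_of_spectral_bound {V X : Type*} [Fintype V]
    [DecidableEq V] [NormedAddCommGroup X] [NormedSpace ℝ X] [FiniteDimensional ℝ X]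
    {G : SimpleGraph V} [DecidableRel G.Adj] {k : ℕ} (hG : G.Connected)
    (hreg : G.IsRegularOfDegree k) (hk : k ≠ 0) {lam : ℝ} (hlam₀ : -1 ≤ lam)
    (hlam : ∀ t : V → ℝ, ∑ i, t i = 0 →
      t ⬝ᵥ ((k : ℝ)⁻¹ • G.adjMatrix ℝ) *ᵥ t ≤ lam * (t ⬝ᵥ t))
    {D : ℝ} (hD : 0 ≤ D) {f : V → X} (hf : ∀ i j, ‖f i - f j‖ ≤ D * G.dist i j) {m : ℕ}
    (hm : Module.finrank ℝ X * ((1 + lam) / 2) ^ m ≤ 1 / 2) :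
    ∑ i, ∑ j, ‖f i - f j‖ ≤ 4 * Fintype.card V ^ 2 * (D * m) := by
  set A := (k : ℝ)⁻¹ • G.adjMatrix ℝ
  have hA : A ∈ doublyStochastic ℝ V := hreg.inv_smul_adjMatrix_mem_doublyStochastic hk
  have hAs : A.IsSymm := G.isSymm_adjMatrix.smul _
  have hsupp (i j : V) (h : lazyWalk A i j ≠ 0) : G.dist i j ≤ 1 := by
    rcases lazyWalk_apply_ne_zero h with rfl | h
    · simp
    · have hij : G.Adj i j := by by_contra hij; simp [A, G.inv_smul_adjMatrix_apply, hij] at h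
      exact (dist_eq_one_iff_adj.2 hij).le
  have hC : Module.finrank ℝ X ^ 2 * (((1 + lam) / 2) ^ 2) ^ m ≤ 1 / 4 := by
    have hμ : 0 ≤ (1 + lam) / 2 := by linarith
    have : 0 ≤ Module.finrank ℝ X * ((1 + lam) / 2) ^ m := by positivity
    calc _ = (Module.finrank ℝ X * ((1 + lam) / 2) ^ m) ^ 2 := by
          rw [mul_pow, ← pow_mul, ← pow_mul, mul_comm 2 m]
      _ ≤ (1 / 2) ^ 2 := by gcongr
      _ = 1 / 4 := by norm_num
  refine sum_sum_norm_sub_le_of_contraction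
    (mem_doublyStochastic_iff_mem_rowStochastic_and_mem_colStochastic.1
      (pow_mem (lazyWalk_mem_doublyStochastic hA) m)).1
    (by positivity) hC (fun t ht => lazyWalk_pow_mulVec_dotProduct_le hA hAs hlam m ht)
    (by positivity) fun i j hij => ?_
  calc ‖f i - f j‖ ≤ D * G.dist i j := hf i j
    _ ≤ D * m := by gcongr; exact_mod_cast hG.dist_le_of_pow_apply_ne_zero hsupp m hij

open Real

theorem exists_nat_mul_pow_le_half {d μ : ℝ} (hd : 1 ≤ d) (hμ₀ : 0 ≤ μ) (hμ₁ : μ < 1) :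
    ∃ m : ℕ, d * μ ^ m ≤ 1 / 2 ∧ m * (1 - μ) ≤ 3 * log (2 * d) := by
  set L := log (2 * d)
  have hL : 1 / 2 ≤ L := by
    have := log_le_log (by norm_num) (by linarith : (2 : ℝ) ≤ 2 * d)
    linarith [log_two_gt_d9]
  have hgap : 0 < 1 - μ := by linarith
  set m := ⌈L / (1 - μ)⌉₊
  refine ⟨m, ?_, ?_⟩
  · have hm : L ≤ m * (1 - μ) := (div_le_iff₀ hgap).1 (Nat.le_ceil _)
    have hpow : μ ^ m ≤ (2 * d)⁻¹ :=
      calc μ ^ m ≤ exp (μ - 1) ^ m := by gcongr; linarith [add_one_le_exp (μ - 1)]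
        _ = exp (-(m * (1 - μ))) := by rw [← exp_nat_mul]; ring_nf
        _ ≤ exp (-L) := exp_le_exp.2 (by linarith)
        _ = (2 * d)⁻¹ := by rw [exp_neg, exp_log (by linarith)]
    calc d * μ ^ m ≤ d * (2 * d)⁻¹ := by gcongr
      _ = 1 / 2 := by field_simp
  · have hm : (m : ℝ) ≤ L / (1 - μ) + 1 := (Nat.ceil_lt_add_one (by positivity)).le
    calc m * (1 - μ) ≤ (L / (1 - μ) + 1) * (1 - μ) := by gcongr
      _ = L + (1 - μ) := by field_simp
      _ ≤ 3 * L := by linarith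

theorem exists_nat_two_mul_pow_le {n k : ℕ} (hk : 2 ≤ k) (hn : 3 ≤ n) :
    ∃ r : ℕ, 2 * (k + 1) ^ r ≤ n ∧ log n ≤ 6 * log k * (r + 1) := by
  have hk' : (2 : ℝ) ≤ k := by exact_mod_cast hk
  have hn' : (3 : ℝ) ≤ n := by exact_mod_cast hn
  have hlogk : 0 < log k := log_pos (by linarith)
  set r := ⌊log (n / 2) / (2 * log k)⌋₊
  refine ⟨r, ?_, ?_⟩
  · have hr : (r : ℝ) * (2 * log k) ≤ log (n / 2) :=
      (le_div_iff₀ (by positivity)).1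
        (Nat.floor_le (div_nonneg (log_nonneg (by linarith)) (by positivity)))
    have hpow : ((k : ℝ) ^ 2) ^ r ≤ n / 2 := by
      rw [← log_le_log_iff (by positivity) (by positivity), log_pow, log_pow]
      push_cast; linarith
    have hsucc : ((k + 1 : ℕ) : ℝ) ^ r ≤ ((k : ℝ) ^ 2) ^ r := by
      gcongr; push_cast; nlinarith
    have : ((2 * (k + 1) ^ r : ℕ) : ℝ) ≤ n := by push_cast at hsucc ⊢; linarith
    exact_mod_cast this
  · have hr : log (n / 2) < (r + 1) * (2 * log k) :=
      (div_lt_iff₀ (by positivity)).1 (Nat.lt_floor_add_one _)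
    have h8 : 3 * log 2 ≤ 2 * log n :=
      calc 3 * log 2 = log ((2 : ℝ) ^ 3) := by rw [log_pow]; norm_num
        _ ≤ log ((n : ℝ) ^ 2) := log_le_log (by norm_num) (by nlinarith)
        _ = 2 * log n := by rw [log_pow]; norm_num
    rw [log_div (by positivity) (by norm_num)] at hr
    nlinarith

-- `288 = 6 · 8 · 3 · 2` collects the constants of `exists_nat_two_mul_pow_le`, of `H`, of
-- `exists_nat_mul_pow_le_half` and of `1 - (1 + lam) / 2 = (1 - lam) / 2`.
theorem half_mul_rpow_le_of_forall {n k d : ℕ} {D lam : ℝ} (hn : 3 ≤ n) (hk : 3 ≤ k)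
    (hD : 1 ≤ D) (hlam : -1 ≤ lam)
    (H : ∀ r m : ℕ, 2 * (k + 1) ^ r ≤ n → d * ((1 + lam) / 2) ^ m ≤ 1 / 2 →
      (r + 1 : ℝ) ≤ 8 * D * m) :
    1 / 2 * (n : ℝ) ^ (1 / 288 * (1 - lam) / (D * log k)) ≤ d := by
  have hd : (1 : ℝ) ≤ d := by
    rcases Nat.eq_zero_or_pos d with h | h
    · have := H 0 0 (by rw [pow_zero]; omega) (by simp [h]); norm_num at this
    · exact_mod_cast h
  have hlogk : 0 < log k := log_pos (by exact_mod_cast (by omega : 1 < k))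
  have hn' : (0 : ℝ) < n := by exact_mod_cast (by omega : 0 < n)
  rcases le_or_gt 1 lam with hge | hlt
  · have : (n : ℝ) ^ (1 / 288 * (1 - lam) / (D * log k)) ≤ 1 :=
      rpow_le_one_of_one_le_of_nonpos (by exact_mod_cast (by omega : 1 ≤ n))
        (div_nonpos_of_nonpos_of_nonneg (by linarith) (by positivity))
    linarith
  obtain ⟨m, hm, hmlog⟩ :=
    exists_nat_mul_pow_le_half hd (by linarith) (by linarith : (1 + lam) / 2 < 1)
  obtain ⟨r, hr, hrlog⟩ := exists_nat_two_mul_pow_le (k := k) (by omega) hn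
  have hrm := H r m hr hm
  have hlogn : log n ≤ 48 * D * log k * m := by
    nlinarith [mul_le_mul_of_nonneg_left hrm (by positivity : (0 : ℝ) ≤ 6 * log k)]
  have hgap : (1 - lam) * log n ≤ 288 * D * log k * log (2 * d) :=
    calc (1 - lam) * log n ≤ (1 - lam) * (48 * D * log k * m) := by gcongr
      _ = 48 * D * log k * (m * (1 - (1 + lam) / 2)) * 2 := by ring
      _ ≤ 48 * D * log k * (3 * log (2 * d)) * 2 := by gcongr
      _ = 288 * D * log k * log (2 * d) := by ring
  have hexp : 1 / 288 * (1 - lam) / (D * log k) * log n ≤ log (2 * d) := by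
    rw [div_mul_eq_mul_div, div_le_iff₀ (by positivity)]; linarith
  have : (n : ℝ) ^ (1 / 288 * (1 - lam) / (D * log k)) ≤ 2 * d := by
    rw [← log_le_log_iff (by positivity) (by positivity), log_rpow hn']; linarith
  linarith

open scoped Classical in
/-- An expander embedding with average distortion `D` into a normed
space `X` forces `dim X ≥ κ · n^{ρ(1-λ₂(G))/(D log k)}` (Corollary 1.2). -/
theorem expander_average_distortion_dimension_lower_bound :
    ∃ ρ : ℝ, 0 < ρ ∧ ∃ κ : ℝ, 0 < κ ∧
      ∀ (n k : ℕ), 3 ≤ k → k ≤ n →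
      ∀ G : SimpleGraph (Fin n), G.Connected → G.IsRegularOfDegree k →
      ∀ lam : ℝ,
        IsGreatest {r : ℝ | ∃ t : Fin n → ℝ, t ≠ 0 ∧ (∑ i, t i) = 0 ∧
            r = (∑ i, ∑ j, (if G.Adj i j then (1 : ℝ) / k else 0) * t i * t j) /
              (∑ i, (t i) ^ 2)} lam →
      ∀ D : ℝ, 1 ≤ D →
      ∀ (X : Type*) [NormedAddCommGroup X] [NormedSpace ℝ X] [FiniteDimensional ℝ X],
        (∃ f : Fin n → X,
          (∀ i j, ‖f i - f j‖ ≤ D * G.dist i j) ∧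
          (∑ i, ∑ j, (G.dist i j : ℝ)) ≤ ∑ i, ∑ j, ‖f i - f j‖) →
        κ * (n : ℝ) ^ (ρ * (1 - lam) / (D * Real.log k)) ≤ Module.finrank ℝ X := by
  refine ⟨1 / 288, by norm_num, 1 / 2, by norm_num, ?_⟩
  intro n k hk hkn G hG hreg lam hlam D hD X _ _ _ ⟨f, hf, hf_avg⟩
  have hk₀ : k ≠ 0 := by omega
  replace hlam : IsGreatest ((k : ℝ)⁻¹ • G.adjMatrix ℝ).meanZeroRayleighQuotients lam := by
    simpa only [meanZeroRayleighQuotients, G.inv_smul_adjMatrix_apply] using hlam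
  have hlam₀ := neg_one_le_of_isGreatest (hreg.inv_smul_adjMatrix_mem_doublyStochastic hk₀) hlam
  refine half_mul_rpow_le_of_forall (hk.trans hkn) hk hD hlam₀ fun r m hr hm => ?_
  have hlow := G.card_sq_mul_succ_le_two_mul_sum_sum_dist hG (fun v => (hreg v).le)
    (by simpa using hr)
  have hup := G.sum_sum_norm_sub_le_of_spectral_bound hG hreg hk₀ hlam₀
    (fun t ht => dotProduct_mulVec_le_of_isGreatest hlam ht) (by linarith) hf hm
  have hn : (0 : ℝ) < n := by exact_mod_cast (by omega : 0 < n)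
  rw [Fintype.card_fin] at hlow hup
  have hlow' : (n : ℝ) ^ 2 * (r + 1) ≤ 2 * ∑ i, ∑ j, (G.dist i j : ℝ) := by exact_mod_cast hlow
  exact le_of_mul_le_mul_left (by linarith : (n : ℝ) ^ 2 * (r + 1) ≤ n ^ 2 * (8 * D * m))
    (by positivity)
end

section
/- Let G = ([n], E_G) be a connected vertex-transitive graph and let diam(G) denote the diameter of the metric space ([n], d_G). Then n²·diam(G) ≥ ∑_{i=1}^n ∑_{j=1}^n d_G(i,j) ≥ n²·diam(G)/4. -/
/-!
Every distance is at most the diameter, which gives the upper bound. For the lower bound pick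
`u, v` with `d(u, v) = diam G`; the triangle inequality through each vertex `w` gives
`n · diam G ≤ ∑_w d(u, w) + ∑_w d(v, w)`, and vertex transitivity makes all row sums
`∑_w d(x, w)` equal, so `n² · diam G ≤ 2 ∑_{i,j} d(i, j)`.
-/

open Finset

namespace SimpleGraph

variable {V W : Type*} {G : SimpleGraph V} {H : SimpleGraph W}

lemma Hom.edist_map_le (f : G →g H) (u v : V) : H.edist (f u) (f v) ≤ G.edist u v := by
  by_cases huv : G.Reachable u v
  · obtain ⟨p, hp⟩ := huv.exists_walk_length_eq_edist
    calc H.edist (f u) (f v) ≤ (p.map f).length := edist_le _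
      _ = G.edist u v := by rw [Walk.length_map, hp]
  · rw [edist_eq_top_of_not_reachable huv]
    exact le_top

lemma Iso.edist_map (φ : G ≃g H) (u v : V) : H.edist (φ u) (φ v) = G.edist u v :=
  le_antisymm (φ.toHom.edist_map_le u v) <| by
    simpa using φ.symm.toHom.edist_map_le (φ u) (φ v)

lemma Iso.dist_map (φ : G ≃g H) (u v : V) : H.dist (φ u) (φ v) = G.dist u v := by
  rw [dist, dist, φ.edist_map]

def IsVertexTransitive (G : SimpleGraph V) : Prop :=
  ∀ u v : V, ∃ φ : G ≃g G, φ u = v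

variable [Fintype V]

lemma Iso.sum_dist_map_left (φ : G ≃g G) (u : V) : ∑ v, G.dist (φ u) v = ∑ v, G.dist u v :=
  (Fintype.sum_equiv φ.toEquiv _ _ fun v => (φ.dist_map u v).symm).symm

lemma IsVertexTransitive.sum_dist_eq (hG : G.IsVertexTransitive) (u v : V) :
    ∑ w, G.dist u w = ∑ w, G.dist v w := by
  obtain ⟨φ, rfl⟩ := hG u v
  exact (φ.sum_dist_map_left u).symm

lemma IsVertexTransitive.sum_sum_dist_eq (hG : G.IsVertexTransitive) (u : V) :
    ∑ v, ∑ w, G.dist v w = Fintype.card V * ∑ w, G.dist u w := by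
  rw [Fintype.sum_congr _ _ fun v => hG.sum_dist_eq v u, sum_const, card_univ, smul_eq_mul]

lemma Connected.sum_sum_dist_le_card_sq_mul_diam (hG : G.Connected) :
    ∑ u, ∑ v, G.dist u v ≤ Fintype.card V ^ 2 * G.diam := by
  have : Nonempty V := hG.nonempty
  have hdiam : G.ediam ≠ ⊤ := connected_iff_ediam_ne_top.mp hG
  calc ∑ u, ∑ v, G.dist u v ≤ ∑ _u : V, ∑ _v : V, G.diam :=
        sum_le_sum fun u _ => sum_le_sum fun v _ => dist_le_diam hdiam
    _ = Fintype.card V ^ 2 * G.diam := by simp only [sum_const, card_univ, smul_eq_mul]; ring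

lemma Connected.card_mul_dist_le_sum_dist_add_sum_dist (hG : G.Connected) (u v : V) :
    Fintype.card V * G.dist u v ≤ ∑ w, G.dist u w + ∑ w, G.dist v w := by
  calc Fintype.card V * G.dist u v = ∑ _w : V, G.dist u v := by
        rw [sum_const, card_univ, smul_eq_mul]
    _ ≤ ∑ w, (G.dist u w + G.dist v w) :=
        sum_le_sum fun w _ => G.dist_comm (u := v) (v := w) ▸ hG.dist_triangle
    _ = ∑ w, G.dist u w + ∑ w, G.dist v w := sum_add_distrib

lemma IsVertexTransitive.card_sq_mul_diam_le_two_mul_sum_sum_dist (hG : G.IsVertexTransitive)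
    (hconn : G.Connected) :
    Fintype.card V ^ 2 * G.diam ≤ 2 * ∑ u, ∑ v, G.dist u v := by
  have : Nonempty V := hconn.nonempty
  obtain ⟨u, v, huv⟩ := G.exists_dist_eq_diam
  have hrow := hconn.card_mul_dist_le_sum_dist_add_sum_dist u v
  rw [huv, ← hG.sum_dist_eq u v] at hrow
  rw [hG.sum_sum_dist_eq u]
  calc Fintype.card V ^ 2 * G.diam = Fintype.card V * (Fintype.card V * G.diam) := by ring
    _ ≤ Fintype.card V * (∑ w, G.dist u w + ∑ w, G.dist u w) := Nat.mul_le_mul_left _ hrow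
    _ = 2 * (Fintype.card V * ∑ w, G.dist u w) := by ring

end SimpleGraph

/-- For a connected vertex-transitive graph,
`n²·diam(G) ≥ ∑_{i,j} d_G(i,j) ≥ n²·diam(G)/4`. -/
theorem vertex_transitive_sum_distances_diam (n : ℕ) (G : SimpleGraph (Fin n))
    (hconn : G.Connected) (htrans : ∀ u v : Fin n, ∃ φ : G ≃g G, φ u = v) :
    (∑ i, ∑ j, (G.dist i j : ℝ)) ≤ (n : ℝ) ^ 2 * (G.diam : ℝ) ∧
    (n : ℝ) ^ 2 * (G.diam : ℝ) / 4 ≤ ∑ i, ∑ j, (G.dist i j : ℝ) := by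
  have hupper := hconn.sum_sum_dist_le_card_sq_mul_diam
  have hlower :=
    SimpleGraph.IsVertexTransitive.card_sq_mul_diam_le_two_mul_sum_sum_dist htrans hconn
  simp only [Fintype.card_fin] at hupper hlower
  constructor
  · exact_mod_cast hupper
  · have hlower' : (n : ℝ) ^ 2 * G.diam ≤ 2 * ∑ i, ∑ j, (G.dist i j : ℝ) := by
      exact_mod_cast hlower
    have hnonneg : (0 : ℝ) ≤ n ^ 2 * G.diam := by positivity
    linarith
end
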